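/- If E is an antichain of subsets of V (all of size ≥ 2) and W = ∑_{e ∈ E} U_e, then the maximal elements under inclusion of the collection D = {S ⊆ V : |S| ≥ 2, U_S ⊆ W} are exactly the hyperedges in E. -/

import Mathlib

/-!
For `S` with `|S| ≥ 2`, pair a function on `Π*(V)` with the Möbius function `μ(σ, ⊤)` over the
partitions `σ` of `S`, each extended to `V` by singletons. This functional is nonzero on `1_{S,⊥}`.
It kills `1_{e,π}` as soon as some `x₀ ∈ S` lies outside `e`: such an indicator sees `σ` only
through the partition obtained by making `x₀` a singleton, and every fiber of that map has Möbius
sum zero. Indeed, a partition `τ` with `k` blocks, one of them `{x₀}`, is hit by `τ` itself and by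
the `k - 1` partitions moving `x₀` into another block, and `μ_k + (k - 1) μ_{k-1} = 0` for
`μ_k = (-1)^(k+1) (k-1)!`. Hence `U_S ≤ ∑_{e ∈ E} U_e` forces `S ⊆ e` for some `e ∈ E`, and the
antichain condition does the rest.
-/

open Submodule Finset

variable {V : Type*} [Fintype V] [DecidableEq V]

/-- The set of nontrivial partitions `Π*(α)` of `α`, encoded as setoids different from `⊤`
(the one-block partition). -/
def NontrivPart (α : Type*) := {P : Setoid α // P ≠ ⊤}

/-- Restriction `P|_S` of a partition of `V` to a subset `S`: the partition of `S` whose blocks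
are the nonempty intersections of blocks of `P` with `S`. -/
def restrictS (S : Set V) (P : Setoid V) : Setoid ↥S := Setoid.comap Subtype.val P

open Classical in
/-- The indicator function `1_{S,π} : Π*(V) → ℝ`, equal to `1` at `P` iff `P|_S = π`. -/
noncomputable def ind (S : Set V) (π : Setoid ↥S) : NontrivPart V → ℝ :=
  fun P => if restrictS S P.1 = π then 1 else 0

/-- The subspace `U_S ⊆ ℝ^{Π*(V)}` spanned by the indicators `1_{S,π}` over nontrivial
partitions `π` of `S` (equal to `{0}` when `|S| ≤ 1`, since then no nontrivial `π` exists). -/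
noncomputable def U (S : Set V) : Submodule ℝ (NontrivPart V → ℝ) :=
  Submodule.span ℝ {f | ∃ π : Setoid ↥S, π ≠ ⊤ ∧ f = ind S π}

/-- Bell number `B n`: the number of partitions (setoids) of an `n`-element set. -/
noncomputable def bell (n : ℕ) : ℕ := Nat.card (Setoid (Fin n))

/-- Stirling number of the second kind `S(u,j)`: the number of partitions of a `u`-element set
into exactly `j` blocks. -/
noncomputable def stirling (u j : ℕ) : ℕ :=
  Nat.card {σ : Setoid (Fin u) // Nat.card (Quotient σ) = j}

namespace Setoid

variable {α : Type*}

instance finite [Finite α] : Finite (Setoid α) :=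
  .of_injective (fun r : Setoid α => ⇑r) fun _ _ h =>
    Setoid.ext fun a b => iff_of_eq (congrFun₂ h a b)

noncomputable instance [Finite α] : Fintype (Setoid α) := .ofFinite _

/-- The Möbius function `μ(σ, ⊤)` of the partition lattice. -/
noncomputable def mobiusTop (σ : Setoid α) : ℝ :=
  (-1) ^ (Nat.card (Quotient σ) + 1) * (Nat.card (Quotient σ) - 1).factorial

lemma mobiusTop_ne_zero (σ : Setoid α) : mobiusTop σ ≠ 0 := by
  unfold mobiusTop
  positivity

def isolate (x₀ : α) (σ : Setoid α) : Setoid α := σ ⊓ ker (· = x₀)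

variable {x₀ : α} {τ : Setoid α}

lemma isolate_rel {σ : Setoid α} {a b : α} : isolate x₀ σ a b ↔ σ a b ∧ (a = x₀ ↔ b = x₀) := by
  rw [isolate, inf_iff_and, ker_def, eq_iff_iff]

lemma isolate_isolate (σ : Setoid α) : isolate x₀ (isolate x₀ σ) = isolate x₀ σ := by
  rw [isolate, isolate, inf_assoc, inf_idem]

lemma eq_of_rel_of_isolate_eq (hτ : isolate x₀ τ = τ) {a : α} (h : τ a x₀) : a = x₀ := by
  rw [← hτ, isolate_rel] at h
  exact h.2.2 rfl

lemma bot_ne_top [Nontrivial α] : (⊥ : Setoid α) ≠ ⊤ := by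
  obtain ⟨a, b, hab⟩ := exists_pair_ne α
  intro h
  have : (⊤ : Setoid α) a b := trivial
  rw [← h] at this
  exact hab this

variable [DecidableEq α]

/-- The partition `τ` with `x₀` moved into the block `c`. -/
def moveInto (τ : Setoid α) (x₀ : α) (c : Quotient τ) : Setoid α :=
  ker (Function.update (Quotient.mk τ) x₀ c)

lemma moveInto_mk_self : moveInto τ x₀ (Quotient.mk τ x₀) = τ := by
  rw [moveInto, Function.update_eq_self]
  exact ker_mk_eq τ

lemma moveInto_rel_self_iff {c : Quotient τ} {a : α} (ha : a ≠ x₀) :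
    moveInto τ x₀ c x₀ a ↔ c = Quotient.mk τ a := by
  rw [moveInto, ker_def, Function.update_self, Function.update_of_ne ha]

lemma moveInto_injective : Function.Injective (moveInto τ x₀) := by
  suffices ∀ c d, moveInto τ x₀ c = moveInto τ x₀ d → c ≠ Quotient.mk τ x₀ → c = d by
    intro c d h
    by_cases hc : c = Quotient.mk τ x₀
    · by_cases hd : d = Quotient.mk τ x₀
      · rw [hc, hd]
      · exact (this d c h.symm hd).symm
    · exact this c d h hc
  intro c d h hc
  have hout : c.out ≠ x₀ := fun h => hc (by rw [← h, Quotient.out_eq])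
  have hrel := (moveInto_rel_self_iff hout).2 c.out_eq.symm
  rw [h, moveInto_rel_self_iff hout] at hrel
  exact c.out_eq.symm.trans hrel.symm

lemma isolate_moveInto (hτ : isolate x₀ τ = τ) (c : Quotient τ) :
    isolate x₀ (moveInto τ x₀ c) = τ := by
  ext a b
  rw [isolate_rel, moveInto, ker_def]
  rcases eq_or_ne a x₀ with rfl | ha <;> rcases eq_or_ne b a with rfl | hb
  · simp
  · simpa [hb] using fun h => hb (eq_of_rel_of_isolate_eq hτ (τ.symm h))
  · simp
  · rcases eq_or_ne b x₀ with rfl | hb'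
    · simpa [ha] using fun h => ha (eq_of_rel_of_isolate_eq hτ h)
    · simp [ha, hb', Quotient.eq]

lemma exists_moveInto_isolate_eq (σ : Setoid α) : ∃ c, moveInto (isolate x₀ σ) x₀ c = σ := by
  by_cases h : ∃ y ≠ x₀, σ x₀ y
  · obtain ⟨y, hy, hxy⟩ := h
    refine ⟨Quotient.mk _ y, ?_⟩
    ext a b
    rw [moveInto, ker_def]
    rcases eq_or_ne a x₀ with rfl | ha <;> rcases eq_or_ne b a with rfl | hb
    · simp
    · simp only [Function.update_self, Function.update_of_ne hb, Quotient.eq, isolate_rel, hy,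
        hb, and_true]
      exact ⟨σ.trans hxy, σ.trans (σ.symm hxy)⟩
    · simp
    · rcases eq_or_ne b x₀ with rfl | hb'
      · simp only [Function.update_self, Function.update_of_ne ha, Quotient.eq, isolate_rel, hy,
          ha, and_true]
        exact ⟨fun h => σ.trans h (σ.symm hxy), fun h => σ.trans h hxy⟩
      · simp [ha, hb', Quotient.eq, isolate_rel]
  · push Not at h
    refine ⟨Quotient.mk _ x₀, ?_⟩
    rw [moveInto_mk_self]
    ext a b
    rw [isolate_rel]
    refine and_iff_left_of_imp fun hab => ⟨?_, ?_⟩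
    · rintro rfl
      by_contra hb
      exact h b hb hab
    · rintro rfl
      by_contra ha
      exact h a ha (σ.symm hab)

lemma card_quotient_moveInto [Finite α] (hτ : isolate x₀ τ = τ) {c : Quotient τ}
    (hc : c ≠ Quotient.mk τ x₀) :
    Nat.card (Quotient (moveInto τ x₀ c)) = Nat.card (Quotient τ) - 1 := by
  have hrange : Set.range (Function.update (Quotient.mk τ) x₀ c) = {Quotient.mk τ x₀}ᶜ := by
    ext d
    refine ⟨?_, fun hd => ⟨d.out, ?_⟩⟩
    · rintro ⟨a, rfl⟩
      rcases eq_or_ne a x₀ with rfl | ha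
      · rwa [Function.update_self]
      · rw [Function.update_of_ne ha]
        exact fun h => ha (eq_of_rel_of_isolate_eq hτ (Quotient.exact h))
    · have hout : d.out ≠ x₀ := fun h => hd (by rw [← h, Quotient.out_eq]; rfl)
      rw [Function.update_of_ne hout, Quotient.out_eq]
  rw [moveInto, Nat.card_congr (quotientKerEquivRange _), hrange, Nat.card_coe_set_eq,
    ← Set.ncard_add_ncard_compl {Quotient.mk τ x₀}, Set.ncard_singleton]
  omega

open Classical in
lemma sum_mobiusTop_filter_isolate_eq [Finite α] {y : α} (hy : y ≠ x₀) (τ : Setoid α) :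
    ∑ σ with isolate x₀ σ = τ, mobiusTop σ = 0 := by
  have := Fintype.ofFinite α
  by_cases hτ : isolate x₀ τ = τ
  swap
  · refine sum_eq_zero fun σ hσ => (hτ ?_).elim
    rw [← (mem_filter.1 hσ).2, isolate_isolate]
  have hfiber : ({σ | isolate x₀ σ = τ} : Finset _) = univ.image (moveInto τ x₀) := by
    ext σ
    simp only [mem_filter, mem_univ, true_and, mem_image]
    constructor
    · rintro rfl
      exact exists_moveInto_isolate_eq σ
    · rintro ⟨c, rfl⟩
      exact isolate_moveInto hτ c
  obtain ⟨n, hn⟩ : ∃ n, Nat.card (Quotient τ) = n + 2 := by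
    have hne : Quotient.mk τ y ≠ Quotient.mk τ x₀ :=
      fun h => hy (eq_of_rel_of_isolate_eq hτ (Quotient.exact h))
    have := Finite.one_lt_card_iff_nontrivial.2 ⟨_, _, hne⟩
    exact ⟨_, (Nat.sub_add_cancel this).symm⟩
  have hmoved : ∀ c ∈ ({Quotient.mk τ x₀}ᶜ : Finset _),
      mobiusTop (moveInto τ x₀ c) = (-1) ^ (n + 2) * n.factorial := by
    intro c hc
    rw [mobiusTop, card_quotient_moveInto hτ (by simpa using hc), hn]
    rfl
  rw [hfiber, sum_image moveInto_injective.injOn,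
    Fintype.sum_eq_add_sum_compl (Quotient.mk τ x₀), moveInto_mk_self, sum_congr rfl hmoved,
    sum_const, card_compl, card_singleton, ← Nat.card_eq_fintype_card, hn, mobiusTop, hn]
  push_cast [Nat.factorial_succ]
  ring

theorem sum_mobiusTop_mul_isolate [Finite α] {y : α} (hy : y ≠ x₀) (G : Setoid α → ℝ) :
    ∑ σ, mobiusTop σ * G (isolate x₀ σ) = 0 := by
  classical
  rw [← sum_fiberwise univ (isolate x₀)]
  refine sum_eq_zero fun τ _ => ?_
  rw [sum_congr rfl fun σ hσ => by rw [(mem_filter.1 hσ).2], ← sum_mul,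
    sum_mobiusTop_filter_isolate_eq hy, zero_mul]

end Setoid

open Setoid

section
variable {X : Type*}

def extendBySingletons (S : Set X) (σ : Setoid S) : Setoid X where
  r a b := a = b ∨ ∃ (ha : a ∈ S) (hb : b ∈ S), σ ⟨a, ha⟩ ⟨b, hb⟩
  iseqv := by
    constructor
    · exact fun a => Or.inl rfl
    · rintro a b (rfl | ⟨ha, hb, h⟩)
      exacts [Or.inl rfl, Or.inr ⟨hb, ha, σ.symm h⟩]
    · rintro a b c (rfl | ⟨ha, hb, h⟩) h'
      · exact h'
      rcases h' with rfl | ⟨hb', hc, h'⟩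
      · exact Or.inr ⟨ha, hb, h⟩
      · exact Or.inr ⟨ha, hc, σ.trans h h'⟩

lemma restrictS_extendBySingletons (S : Set X) (σ : Setoid S) :
    restrictS S (extendBySingletons S σ) = σ := by
  ext a b
  change ((a : X) = b ∨ ∃ (ha : (a : X) ∈ S) (hb : (b : X) ∈ S), σ ⟨a, ha⟩ ⟨b, hb⟩) ↔ σ a b
  exact ⟨by rintro (h | ⟨_, _, h⟩); exacts [Subtype.ext h ▸ σ.refl a, h],
    fun h => Or.inr ⟨a.2, b.2, h⟩⟩

lemma restrictS_top (S : Set X) : restrictS S ⊤ = ⊤ := rfl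

lemma restrictS_extendBySingletons_isolate {S e : Set X} {x₀ : S} (hx₀ : (x₀ : X) ∉ e)
    (σ : Setoid S) :
    restrictS e (extendBySingletons S (isolate x₀ σ)) = restrictS e (extendBySingletons S σ) := by
  ext a b
  change ((a : X) = b ∨ ∃ (ha : (a : X) ∈ S) (hb : (b : X) ∈ S), isolate x₀ σ ⟨a, ha⟩ ⟨b, hb⟩) ↔
    ((a : X) = b ∨ ∃ (ha : (a : X) ∈ S) (hb : (b : X) ∈ S), σ ⟨a, ha⟩ ⟨b, hb⟩)
  have hne : ∀ c : e, ∀ hc : (c : X) ∈ S, (⟨c, hc⟩ : S) ≠ x₀ :=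
    fun c _ h => hx₀ (h ▸ c.2)
  simp only [isolate_rel, hne, iff_self, and_true]

open Classical in
noncomputable def mobiusFunctional [Finite X] (S : Set X) : (NontrivPart X → ℝ) →ₗ[ℝ] ℝ :=
  ∑ σ : Setoid S, if h : extendBySingletons S σ = ⊤ then 0
    else mobiusTop σ • LinearMap.proj (R := ℝ) (φ := fun _ : NontrivPart X => ℝ) ⟨_, h⟩

open Classical in
lemma mobiusFunctional_ind [Finite X] (S : Set X) {e : Set X} {π : Setoid e} (hπ : π ≠ ⊤) :
    mobiusFunctional S (ind e π) =
      ∑ σ : Setoid S, mobiusTop σ * if restrictS e (extendBySingletons S σ) = π then 1 else 0 := by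
  simp only [mobiusFunctional, LinearMap.sum_apply]
  refine sum_congr rfl fun σ _ => ?_
  by_cases h : extendBySingletons S σ = ⊤
  · rw [dif_pos h, h, restrictS_top, if_neg (Ne.symm hπ), mul_zero, LinearMap.zero_apply]
  · rw [dif_neg h]
    rfl

lemma mobiusFunctional_ind_self [Finite X] (S : Set X) {π : Setoid S} (hπ : π ≠ ⊤) :
    mobiusFunctional S (ind S π) = mobiusTop π := by
  rw [mobiusFunctional_ind S hπ, sum_eq_single π, restrictS_extendBySingletons, if_pos rfl, mul_one]
  · intro σ _ hσ
    rw [restrictS_extendBySingletons, if_neg hσ, mul_zero]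
  · exact fun h => (h (mem_univ π)).elim

lemma mobiusFunctional_ind_eq_zero [Finite X] {S e : Set X} {x₀ y : S} (hy : y ≠ x₀)
    (hx₀ : (x₀ : X) ∉ e) {π : Setoid e} (hπ : π ≠ ⊤) : mobiusFunctional S (ind e π) = 0 := by
  classical
  rw [mobiusFunctional_ind S hπ]
  convert sum_mobiusTop_mul_isolate hy
    (fun σ => if restrictS e (extendBySingletons S σ) = π then (1 : ℝ) else 0) using 3 with σ
  rw [restrictS_extendBySingletons_isolate hx₀]

theorem exists_superset_of_U_le_iSup [Finite X] {S : Set X} (hS : 2 ≤ Nat.card S)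
    {E : Set (Set X)} (hSE : U S ≤ ⨆ e ∈ E, U e) : ∃ e ∈ E, S ⊆ e := by
  have : Nontrivial S := Finite.one_lt_card_iff_nontrivial.1 hS
  by_contra! hE
  have hker : (⨆ e ∈ E, U e) ≤ LinearMap.ker (mobiusFunctional S) := by
    refine iSup₂_le fun e he => span_le.2 ?_
    rintro _ ⟨π, hπ, rfl⟩
    obtain ⟨x₀, hx₀S, hx₀e⟩ := Set.not_subset.1 (hE e he)
    obtain ⟨y, hy⟩ := exists_ne (⟨x₀, hx₀S⟩ : S)
    exact mobiusFunctional_ind_eq_zero hy hx₀e hπ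
  have hbot := hker (hSE (subset_span ⟨⊥, Setoid.bot_ne_top, rfl⟩))
  rw [LinearMap.mem_ker, mobiusFunctional_ind_self S Setoid.bot_ne_top] at hbot
  exact mobiusTop_ne_zero _ hbot

end

theorem stmt14_general (E : Set (Set V)) (hE2 : ∀ e ∈ E, 2 ≤ Nat.card ↥e)
    (hanti : ∀ e ∈ E, ∀ f ∈ E, e ⊆ f → e = f) :
    ∀ S : Set V,
      (S ∈ {S : Set V | 2 ≤ Nat.card ↥S ∧ U S ≤ ⨆ e ∈ E, U e} ∧
        ∀ S' ∈ {S : Set V | 2 ≤ Nat.card ↥S ∧ U S ≤ ⨆ e ∈ E, U e}, S ⊆ S' → S = S')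
      ↔ S ∈ E := by
  intro S
  have hmem : ∀ e ∈ E, e ∈ {S : Set V | 2 ≤ Nat.card ↥S ∧ U S ≤ ⨆ e ∈ E, U e} :=
    fun e he => ⟨hE2 e he, le_iSup₂ (f := fun e _ => U e) e he⟩
  constructor
  · rintro ⟨⟨hS, hSE⟩, hmax⟩
    obtain ⟨e, he, hSe⟩ := exists_superset_of_U_le_iSup hS hSE
    exact hmax e (hmem e he) hSe ▸ he
  · intro hS
    refine ⟨hmem S hS, fun S' ⟨hS', hS'E⟩ hSS' => ?_⟩
    obtain ⟨e, he, hS'e⟩ := exists_superset_of_U_le_iSup hS' hS'E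
    exact hSS'.antisymm (hanti S hS e he (hSS'.trans hS'e) ▸ hS'e)

/-- if `E` is an antichain of subsets of `V` of size ≥ 2 and `W = ∑_{e ∈ E} U_e`,
then the maximal elements (under inclusion) of `D = {S : |S| ≥ 2, U_S ⊆ W}` are exactly the
hyperedges in `E`. -/
theorem stmt14 (E : Set (Set V)) (hEfin : E.Finite) (hE2 : ∀ e ∈ E, 2 ≤ Nat.card ↥e)
    (hanti : ∀ e ∈ E, ∀ f ∈ E, e ⊆ f → e = f) :
    ∀ S : Set V,
      (S ∈ {S : Set V | 2 ≤ Nat.card ↥S ∧ U S ≤ ⨆ e ∈ E, U e} ∧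
        ∀ S' ∈ {S : Set V | 2 ≤ Nat.card ↥S ∧ U S ≤ ⨆ e ∈ E, U e}, S ⊆ S' → S = S')
      ↔ S ∈ E :=
  stmt14_general E hE2 hanti
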